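/- Let q > 0 and, for 0 < a ≤ ρ, define λ(a, ρ) = ∫_1^{sinh(ρ)/sinh(a)} (v^{2q} − 1)^{−1/2} · sinh(a) · (1 + v² sinh(a)²)^{−1/2} dv. Then for any 0 < a < b there exists exactly one ρ* ∈ (b, ∞) such that λ(a, ρ*) = λ(b, ρ*). -/

import Mathlib

/-! Write `f_s(v) = (v^{2q} - 1)^{-1/2} · s (1 + v²s²)^{-1/2}` (`catIntegrand q s v`), so that
`λ(a, ρ) = ∫_1^{sinh ρ / sinh a} f_{sinh a}`. With `s = sinh a`, `c = sinh b / sinh a` and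
`X = sinh ρ / sinh b`, the difference `λ(a, ρ) - λ(b, ρ)` equals `∫_1^{cX} f_s - ∫_1^X f_{cs}`.
After the substitution `v = c w` its increments are integrals of `c f_s(c w) - f_{cs}(w) < 0`:
only the factor `(v^{2q} - 1)^{-1/2}` changes, and it decreases. So the difference is strictly
decreasing on `[b, ∞)`. It is positive at `ρ = b` and tends to
`∫_1^∞ f_{sinh a} - ∫_1^∞ f_{sinh b}`, which is negative because `s (1 + v²s²)^{-1/2}` increases
with `s`. The intermediate value theorem gives the crossing, strict monotonicity its uniqueness. -/

/-- The height at radius `ρ` of the profile curve of the r-catenoid with neck radius `a`. -/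
noncomputable def catLam (q a ρ : ℝ) : ℝ :=
  ∫ v in (1 : ℝ)..(Real.sinh ρ / Real.sinh a),
    (v ^ (2 * q) - 1) ^ (-(1 : ℝ) / 2) * Real.sinh a *
      (1 + v ^ 2 * Real.sinh a ^ 2) ^ (-(1 : ℝ) / 2)

open Real Set Filter MeasureTheory Topology

lemma mul_one_sub_inv_le_rpow_sub_one {p v : ℝ} (hp : 0 ≤ p) (hv : 0 < v) :
    p * (1 - v⁻¹) ≤ v ^ p - 1 := by
  have hlog : p * (1 - v⁻¹) ≤ p * log v :=
    mul_le_mul_of_nonneg_left (one_sub_inv_le_log_of_pos hv) hp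
  have hexp : p * log v + 1 ≤ v ^ p := by
    rw [rpow_def_of_pos hv, mul_comm]
    exact add_one_le_exp _
  linarith

lemma integrableOn_rpow_sub_one_mul_inv_Ioc {p : ℝ} (hp : 0 < p) :
    IntegrableOn (fun v : ℝ => (v ^ p - 1) ^ (-(1 : ℝ) / 2) * v⁻¹) (Ioc 1 2) := by
  have hdom : IntegrableOn (fun v : ℝ => (p / 2 * (v - 1)) ^ (-(1 : ℝ) / 2)) (Ioc 1 2) := by
    have h : IntervalIntegrable (fun v : ℝ => (v - 1) ^ (-(1 : ℝ) / 2)) volume 1 2 := by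
      simpa [one_add_one_eq_two] using (intervalIntegral.intervalIntegrable_rpow'
        (r := -(1 : ℝ) / 2) (by norm_num) (a := 0) (b := 1)).comp_sub_right 1
    refine IntegrableOn.congr_fun (h.1.const_mul ((p / 2) ^ (-(1 : ℝ) / 2)))
      (fun v hv => ?_) measurableSet_Ioc
    rw [mul_rpow (by positivity) (by linarith [hv.1])]
  refine hdom.mono' (by fun_prop) ((ae_restrict_iff' measurableSet_Ioc).2 (ae_of_all _ ?_))
  rintro v ⟨hv1, hv2⟩
  have hv0 : 0 < v := by linarith
  have hlower : p / 2 * (v - 1) ≤ v ^ p - 1 := by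
    have h : (v - 1) / 2 ≤ 1 - v⁻¹ := by
      rw [show 1 - v⁻¹ = (v - 1) / v by field_simp]
      exact div_le_div_of_nonneg_left (by linarith) hv0 hv2
    calc p / 2 * (v - 1) = p * ((v - 1) / 2) := by ring
      _ ≤ p * (1 - v⁻¹) := mul_le_mul_of_nonneg_left h hp.le
      _ ≤ v ^ p - 1 := mul_one_sub_inv_le_rpow_sub_one hp.le hv0
  have hpos : 0 < p / 2 * (v - 1) := by nlinarith
  have hA : 0 ≤ (v ^ p - 1) ^ (-(1 : ℝ) / 2) := rpow_nonneg (hpos.le.trans hlower) _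
  rw [norm_of_nonneg (by positivity)]
  calc (v ^ p - 1) ^ (-(1 : ℝ) / 2) * v⁻¹ ≤ (v ^ p - 1) ^ (-(1 : ℝ) / 2) :=
        mul_le_of_le_one_right hA (inv_le_one_of_one_le₀ hv1.le)
    _ ≤ (p / 2 * (v - 1)) ^ (-(1 : ℝ) / 2) := rpow_le_rpow_of_nonpos hpos hlower (by norm_num)

lemma integrableOn_rpow_sub_one_mul_inv_Ioi_two {p : ℝ} (hp : 0 < p) :
    IntegrableOn (fun v : ℝ => (v ^ p - 1) ^ (-(1 : ℝ) / 2) * v⁻¹) (Ioi 2) := by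
  set k : ℝ := 1 - 2 ^ (-p)
  have hk : 0 < k := sub_pos.2 (rpow_lt_one_of_one_lt_of_neg one_lt_two (by linarith))
  have hdom : IntegrableOn (fun v : ℝ => k ^ (-(1 : ℝ) / 2) * v ^ (-(p / 2 + 1))) (Ioi 2) :=
    (integrableOn_Ioi_rpow_of_lt (by linarith) two_pos).const_mul _
  refine hdom.mono' (by fun_prop) ((ae_restrict_iff' measurableSet_Ioi).2 (ae_of_all _ ?_))
  intro v (hv2 : 2 < v)
  have hv0 : 0 < v := by linarith
  have hlower : k * v ^ p ≤ v ^ p - 1 := by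
    have : 1 ≤ 2 ^ (-p) * v ^ p := by
      rw [rpow_neg zero_le_two, ← div_eq_inv_mul, ← div_rpow hv0.le zero_le_two]
      exact one_le_rpow (by rw [le_div_iff₀ two_pos]; linarith) hp.le
    linarith
  have hpos : 0 < k * v ^ p := by positivity
  have hA : 0 ≤ (v ^ p - 1) ^ (-(1 : ℝ) / 2) := rpow_nonneg (hpos.le.trans hlower) _
  rw [norm_of_nonneg (by positivity)]
  calc (v ^ p - 1) ^ (-(1 : ℝ) / 2) * v⁻¹ ≤ (k * v ^ p) ^ (-(1 : ℝ) / 2) * v⁻¹ :=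
        mul_le_mul_of_nonneg_right (rpow_le_rpow_of_nonpos hpos hlower (by norm_num))
          (by positivity)
    _ = k ^ (-(1 : ℝ) / 2) * v ^ (-(p / 2 + 1)) := by
        rw [mul_rpow hk.le (by positivity), ← rpow_mul hv0.le, mul_assoc, ← rpow_neg_one v,
          ← rpow_add hv0]
        ring_nf

lemma integrableOn_rpow_sub_one_mul_inv_Ioi {p : ℝ} (hp : 0 < p) :
    IntegrableOn (fun v : ℝ => (v ^ p - 1) ^ (-(1 : ℝ) / 2) * v⁻¹) (Ioi 1) := by
  rw [← Ioc_union_Ioi_eq_Ioi one_le_two]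
  exact (integrableOn_rpow_sub_one_mul_inv_Ioc hp).union
    (integrableOn_rpow_sub_one_mul_inv_Ioi_two hp)

lemma mul_rpow_neg_half_le_inv {s v : ℝ} (hs : 0 < s) (hv : 0 < v) :
    s * (1 + v ^ 2 * s ^ 2) ^ (-(1 : ℝ) / 2) ≤ v⁻¹ := by
  calc s * (1 + v ^ 2 * s ^ 2) ^ (-(1 : ℝ) / 2)
      ≤ s * ((v * s) ^ (2 : ℝ)) ^ (-(1 : ℝ) / 2) := by
        refine mul_le_mul_of_nonneg_left (rpow_le_rpow_of_nonpos (by positivity) ?_ (by norm_num))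
          hs.le
        rw [rpow_two]
        nlinarith
    _ = v⁻¹ := by
        rw [← rpow_mul (by positivity)]
        norm_num [rpow_neg_one]
        field_simp

lemma mul_rpow_neg_half_eq {s c : ℝ} (hs : 0 < s) (hc : 0 ≤ c) :
    s * (1 + c * s ^ 2) ^ (-(1 : ℝ) / 2) = ((s ^ 2)⁻¹ + c) ^ (-(1 : ℝ) / 2) := by
  have h : (s ^ 2)⁻¹ + c = (s ^ 2)⁻¹ * (1 + c * s ^ 2) := by field_simp
  rw [h, mul_rpow (by positivity) (by positivity), ← rpow_natCast, ← rpow_neg_one,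
    ← rpow_mul hs.le, ← rpow_mul hs.le]
  norm_num

lemma strictMonoOn_mul_rpow_neg_half {c : ℝ} (hc : 0 ≤ c) :
    StrictMonoOn (fun s : ℝ => s * (1 + c * s ^ 2) ^ (-(1 : ℝ) / 2)) (Ioi 0) := by
  intro s (hs : 0 < s) S (hS : 0 < S) hsS
  simp only [mul_rpow_neg_half_eq hs hc, mul_rpow_neg_half_eq hS hc]
  refine rpow_lt_rpow_of_neg (by positivity) ?_ (by norm_num)
  gcongr

lemma tendsto_sinh_atTop : Tendsto sinh atTop atTop :=
  tendsto_atTop_mono' _ ((eventually_ge_atTop 0).mono fun _ => self_le_sinh_iff.2) tendsto_id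

lemma existsUnique_zero_of_strictAntiOn {f : ℝ → ℝ} {b : ℝ} (hcont : ContinuousOn f (Ici b))
    (hanti : StrictAntiOn f (Ici b)) (hb : 0 < f b) (htop : ∀ᶠ x in atTop, f x < 0) :
    ∃! x, x ∈ Ioi b ∧ f x = 0 := by
  obtain ⟨T, hT, hbT⟩ := (htop.and (eventually_gt_atTop b)).exists
  obtain ⟨x, hx, hfx⟩ :=
    intermediate_value_Ioo' hbT.le (hcont.mono Icc_subset_Ici_self) ⟨hT, hb⟩
  exact ⟨x, ⟨hx.1, hfx⟩, fun y hy => hanti.injOn (mem_Ici_of_Ioi hy.1) (mem_Ici_of_Ioi hx.1)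
    (hy.2.trans hfx.symm)⟩

noncomputable def catIntegrand (q s v : ℝ) : ℝ :=
  (v ^ (2 * q) - 1) ^ (-(1 : ℝ) / 2) * s * (1 + v ^ 2 * s ^ 2) ^ (-(1 : ℝ) / 2)

lemma catIntegrand_pos {q s v : ℝ} (hq : 0 < q) (hs : 0 < s) (hv : 1 < v) :
    0 < catIntegrand q s v := by
  have : 0 < v ^ (2 * q) - 1 := sub_pos.2 (one_lt_rpow hv (by positivity))
  unfold catIntegrand
  positivity

lemma catIntegrand_le {q s v : ℝ} (hq : 0 < q) (hs : 0 < s) (hv : 1 < v) :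
    catIntegrand q s v ≤ (v ^ (2 * q) - 1) ^ (-(1 : ℝ) / 2) * v⁻¹ := by
  have : 0 < v ^ (2 * q) - 1 := sub_pos.2 (one_lt_rpow hv (by positivity))
  rw [catIntegrand, mul_assoc]
  exact mul_le_mul_of_nonneg_left (mul_rpow_neg_half_le_inv hs (by linarith)) (by positivity)

lemma integrableOn_catIntegrand {q s : ℝ} (hq : 0 < q) (hs : 0 < s) :
    IntegrableOn (catIntegrand q s) (Ioi 1) := by
  refine (integrableOn_rpow_sub_one_mul_inv_Ioi (by positivity : 0 < 2 * q)).mono'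
    (by unfold catIntegrand; fun_prop)
    ((ae_restrict_iff' measurableSet_Ioi).2 (ae_of_all _ fun v (hv : 1 < v) => ?_))
  rw [norm_of_nonneg (catIntegrand_pos hq hs hv).le]
  exact catIntegrand_le hq hs hv

lemma intervalIntegrable_catIntegrand {q s x y : ℝ} (hq : 0 < q) (hs : 0 < s) (hx : 1 ≤ x)
    (hy : 1 ≤ y) : IntervalIntegrable (catIntegrand q s) volume x y :=
  intervalIntegrable_iff.2 <|
    (integrableOn_catIntegrand hq hs).mono_set fun _ ht => (le_min hx hy).trans_lt ht.1

lemma catIntegrand_lt_catIntegrand {q s S v : ℝ} (hq : 0 < q) (hs : 0 < s) (hsS : s < S)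
    (hv : 1 < v) : catIntegrand q s v < catIntegrand q S v := by
  have : 0 < v ^ (2 * q) - 1 := sub_pos.2 (one_lt_rpow hv (by positivity))
  simp only [catIntegrand, mul_assoc]
  exact mul_lt_mul_of_pos_left
    (strictMonoOn_mul_rpow_neg_half (sq_nonneg v) hs (hs.trans hsS) hsS) (by positivity)

lemma setIntegral_catIntegrand_lt {q s S : ℝ} (hq : 0 < q) (hs : 0 < s) (hsS : s < S) :
    ∫ v in Ioi 1, catIntegrand q s v < ∫ v in Ioi 1, catIntegrand q S v := by
  have hint : IntegrableOn (fun v => catIntegrand q S v - catIntegrand q s v) (Ioi 1) :=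
    (integrableOn_catIntegrand hq (hs.trans hsS)).sub (integrableOn_catIntegrand hq hs)
  have hgap : ∀ v ∈ Ioi (1 : ℝ), 0 < catIntegrand q S v - catIntegrand q s v :=
    fun v hv => sub_pos.2 (catIntegrand_lt_catIntegrand hq hs hsS hv)
  have hpos : 0 < ∫ v in Ioi 1, (catIntegrand q S v - catIntegrand q s v) := by
    rw [setIntegral_pos_iff_support_of_nonneg_ae
      ((ae_restrict_iff' measurableSet_Ioi).2 (ae_of_all _ fun v hv => (hgap v hv).le)) hint,
      inter_eq_right.2 fun v hv => Function.mem_support.2 (hgap v hv).ne', Real.volume_Ioi]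
    exact ENNReal.zero_lt_top
  rwa [integral_sub (integrableOn_catIntegrand hq (hs.trans hsS))
    (integrableOn_catIntegrand hq hs), sub_pos] at hpos

lemma mul_catIntegrand_mul_lt {q s c w : ℝ} (hq : 0 < q) (hs : 0 < s) (hc : 1 < c)
    (hw : 1 < w) : c * catIntegrand q s (c * w) < catIntegrand q (c * s) w := by
  have hw' : 0 < w ^ (2 * q) - 1 := sub_pos.2 (one_lt_rpow hw (by positivity))
  have hcw : w ^ (2 * q) < (c * w) ^ (2 * q) :=
    rpow_lt_rpow (by linarith) (by nlinarith) (by positivity)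
  have hB : 0 < c * s * (1 + w ^ 2 * (c * s) ^ 2) ^ (-(1 : ℝ) / 2) := by positivity
  calc c * catIntegrand q s (c * w)
      = ((c * w) ^ (2 * q) - 1) ^ (-(1 : ℝ) / 2) *
          (c * s * (1 + w ^ 2 * (c * s) ^ 2) ^ (-(1 : ℝ) / 2)) := by
        rw [catIntegrand]; ring_nf
    _ < (w ^ (2 * q) - 1) ^ (-(1 : ℝ) / 2) *
          (c * s * (1 + w ^ 2 * (c * s) ^ 2) ^ (-(1 : ℝ) / 2)) :=
        mul_lt_mul_of_pos_right (rpow_lt_rpow_of_neg hw' (by linarith) (by norm_num)) hB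
    _ = catIntegrand q (c * s) w := by rw [catIntegrand]; ring

lemma strictAntiOn_integral_mul_sub_integral {q s c : ℝ} (hq : 0 < q) (hs : 0 < s) (hc : 1 < c) :
    StrictAntiOn (fun X => (∫ v in 1..c * X, catIntegrand q s v) -
      ∫ v in 1..X, catIntegrand q (c * s) v) (Ici 1) := by
  intro X₁ (hX₁ : 1 ≤ X₁) X₂ (hX₂ : 1 ≤ X₂) hX
  have hc0 : 0 < c := by linarith
  have hcs : 0 < c * s := by positivity
  have hcX : ∀ {X : ℝ}, 1 ≤ X → 1 ≤ c * X := fun h => by nlinarith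
  have hscaled : ∫ v in c * X₁..c * X₂, catIntegrand q s v =
      ∫ w in X₁..X₂, c * catIntegrand q s (c * w) := by
    rw [intervalIntegral.integral_const_mul, intervalIntegral.integral_comp_mul_left _ hc0.ne',
      smul_eq_mul, mul_inv_cancel_left₀ hc0.ne']
  have hlt : ∀ w ∈ Ioo X₁ X₂, 0 < catIntegrand q (c * s) w - c * catIntegrand q s (c * w) :=
    fun w hw => sub_pos.2 (mul_catIntegrand_mul_lt hq hs hc (hX₁.trans_lt hw.1))
  have hint : IntervalIntegrable (catIntegrand q (c * s)) volume X₁ X₂ :=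
    intervalIntegrable_catIntegrand hq hcs hX₁ hX₂
  have hint' : IntervalIntegrable (fun w => c * catIntegrand q s (c * w)) volume X₁ X₂ := by
    refine hint.mono_fun' (by unfold catIntegrand; fun_prop)
      ((ae_restrict_iff' measurableSet_uIoc).2 (ae_of_all _ fun w hw => ?_))
    have hw : 1 < w := by
      rw [uIoc_of_le hX.le] at hw
      exact hX₁.trans_lt hw.1
    change ‖c * catIntegrand q s (c * w)‖ ≤ _
    rw [norm_of_nonneg (mul_pos hc0 (catIntegrand_pos hq hs (by nlinarith))).le]
    exact (mul_catIntegrand_mul_lt hq hs hc hw).le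
  have hpos := intervalIntegral.intervalIntegral_pos_of_pos_on (hint.sub hint') hlt hX
  rw [intervalIntegral.integral_sub hint hint', ← hscaled] at hpos
  have ha := intervalIntegral.integral_interval_sub_left
    (intervalIntegrable_catIntegrand hq hs le_rfl (hcX hX₂))
    (intervalIntegrable_catIntegrand hq hs le_rfl (hcX hX₁))
  have hb := intervalIntegral.integral_interval_sub_left
    (intervalIntegrable_catIntegrand hq hcs le_rfl hX₂)
    (intervalIntegrable_catIntegrand hq hcs le_rfl hX₁)
  dsimp only
  linarith

lemma catLam_eq_intervalIntegral (q a ρ : ℝ) :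
    catLam q a ρ = ∫ v in 1..sinh ρ / sinh a, catIntegrand q (sinh a) v := rfl

lemma catLam_self (q : ℝ) {a : ℝ} (ha : 0 < a) : catLam q a a = 0 := by
  rw [catLam_eq_intervalIntegral, div_self (sinh_pos_iff.2 ha).ne',
    intervalIntegral.integral_same]

lemma catLam_pos {q a ρ : ℝ} (hq : 0 < q) (ha : 0 < a) (hρ : a < ρ) : 0 < catLam q a ρ := by
  have hs : 0 < sinh a := sinh_pos_iff.2 ha
  have hX : 1 < sinh ρ / sinh a := (one_lt_div hs).2 (sinh_lt_sinh.2 hρ)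
  exact intervalIntegral.intervalIntegral_pos_of_pos_on
    (intervalIntegrable_catIntegrand hq hs le_rfl hX.le)
    (fun v hv => catIntegrand_pos hq hs hv.1) hX

lemma tendsto_catLam {q a : ℝ} (hq : 0 < q) (ha : 0 < a) :
    Tendsto (catLam q a) atTop (𝓝 (∫ v in Ioi 1, catIntegrand q (sinh a) v)) :=
  intervalIntegral_tendsto_integral_Ioi 1 (integrableOn_catIntegrand hq (sinh_pos_iff.2 ha))
    (tendsto_sinh_atTop.atTop_div_const (sinh_pos_iff.2 ha))

lemma continuousOn_catLam {q a : ℝ} (hq : 0 < q) (ha : 0 < a) :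
    ContinuousOn (catLam q a) (Ici a) := by
  have hs : 0 < sinh a := sinh_pos_iff.2 ha
  have hprim : ContinuousOn (fun X => ∫ v in 1..X, catIntegrand q (sinh a) v) (Ici 1) := by
    intro X (hX : 1 ≤ X)
    have hIcc : ContinuousOn (fun X => ∫ v in 1..X, catIntegrand q (sinh a) v) (uIcc 1 (X + 1)) :=
      intervalIntegral.continuousOn_primitive_interval'
        (intervalIntegrable_catIntegrand hq hs le_rfl (by linarith)) left_mem_uIcc
    refine (hIcc X ?_).mono_of_mem_nhdsWithin ?_
    · rw [uIcc_of_le (by linarith)]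
      exact ⟨hX, by linarith⟩
    · rw [uIcc_of_le (by linarith), ← Ici_inter_Iic]
      exact inter_mem_nhdsWithin _ (Iic_mem_nhds (by linarith))
  exact hprim.comp (continuous_sinh.continuousOn.div_const _)
    fun ρ (hρ : a ≤ ρ) => (one_le_div hs).2 (sinh_le_sinh.2 hρ)

lemma strictAntiOn_catLam_sub {q a b : ℝ} (hq : 0 < q) (ha : 0 < a) (hab : a < b) :
    StrictAntiOn (fun ρ => catLam q a ρ - catLam q b ρ) (Ici b) := by
  have hs : 0 < sinh a := sinh_pos_iff.2 ha
  have hS : 0 < sinh b := sinh_pos_iff.2 (ha.trans hab)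
  set c := sinh b / sinh a
  have hc : 1 < c := (one_lt_div hs).2 (sinh_lt_sinh.2 hab)
  have hcs : c * sinh a = sinh b := div_mul_cancel₀ _ hs.ne'
  have hG := strictAntiOn_integral_mul_sub_integral hq hs hc
  rw [hcs] at hG
  refine (hG.comp_strictMonoOn (f := fun ρ => sinh ρ / sinh b) ?_ ?_).congr fun ρ _ => ?_
  · exact fun ρ₁ _ ρ₂ _ h => div_lt_div_of_pos_right (sinh_lt_sinh.2 h) hS
  · exact fun ρ (hρ : b ≤ ρ) => (one_le_div hS).2 (sinh_le_sinh.2 hρ)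
  · simp only [Function.comp, catLam_eq_intervalIntegral]
    congr 2
    field_simp
    linear_combination sinh ρ * hcs

/-- For `0 < a < b`, the profile curves of the r-catenoids with neck radii
`a` and `b` intersect at exactly one radius `ρ* > b`: there is exactly one `ρ* ∈ (b, ∞)`
with `λ(a, ρ*) = λ(b, ρ*)`. -/
theorem stmt_17 (q a b : ℝ) (hq : 0 < q) (ha : 0 < a) (hab : a < b) :
    ∃! ρ : ℝ, ρ ∈ Set.Ioi b ∧ catLam q a ρ = catLam q b ρ := by
  have hb : 0 < b := ha.trans hab
  have hcont : ContinuousOn (fun ρ => catLam q a ρ - catLam q b ρ) (Ici b) :=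
    ((continuousOn_catLam hq ha).mono (Ici_subset_Ici.2 hab.le)).sub (continuousOn_catLam hq hb)
  have hstart : 0 < catLam q a b - catLam q b b := by
    rw [catLam_self q hb, sub_zero]
    exact catLam_pos hq ha hab
  have hlimit : ∀ᶠ ρ in atTop, catLam q a ρ - catLam q b ρ < 0 :=
    ((tendsto_catLam hq ha).sub (tendsto_catLam hq hb)).eventually_lt_const <| sub_neg.2 <|
      setIntegral_catIntegrand_lt hq (sinh_pos_iff.2 ha) (sinh_lt_sinh.2 hab)
  simpa only [sub_eq_zero] using
    existsUnique_zero_of_strictAntiOn hcont (strictAntiOn_catLam_sub hq ha hab) hstart hlimit
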